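/- arXiv:1607.04362 — 2 statements merged into one kernel-verified Lean document; each statement's English description precedes it below -/
import Mathlib

section
/- For any continuous strictly increasing bijections φ_i : ℝ≥0 → ℝ≥0, the virtual-welfare-maximizing mechanism for value maximizers—running the iterated-max welfare mechanism on virtual values φ_i(v_i(o)) and charging p_i = φ_i^{-1}(π_i) where π_i is the virtual externality price—is truthful for simple value maximizers on the set of value profiles where no ties among virtual values occur. In particular, in unrestricted domains, social choice functions other than affine maximizers of the values are truthfully implementable for value maximizers. -/
open scoped NNReal
open Finset

variable {O : Type*} [Fintype O] [DecidableEq O] {n : ℕ}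

/-- The values of bidders in `s` for outcome `o`, sorted in descending order. -/
noncomputable def sortedValsOn (s : Finset (Fin n)) (b : Fin n → O → ℝ≥0) (o : O) :
    List ℝ≥0 :=
  ((s.val.map (fun i => b i o)).sort (· ≤ ·)).reverse

/-- `ostar` is an outcome of the iterated-max welfare mechanism on bidders `s`:
its descending sorted value vector is lexicographically maximal. -/
def IsIterMaxOn (s : Finset (Fin n)) (b : Fin n → O → ℝ≥0) (ostar : O) : Prop :=
  ∀ o : O, sortedValsOn s b o = sortedValsOn s b ostar ∨
    List.Lex (· < ·) (sortedValsOn s b o) (sortedValsOn s b ostar)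

/-- No ties across (bidder, outcome) pairs. -/
def DistinctVals (b : Fin n → O → ℝ≥0) : Prop :=
  ∀ (i j : Fin n) (o₁ o₂ : O), (i, o₁) ≠ (j, o₂) → b i o₁ ≠ b j o₂

/-- Externality payment of bidder `i` for the iterated-max mechanism `g`. -/
noncomputable def extPay (g : Finset (Fin n) → (Fin n → O → ℝ≥0) → O)
    (b : Fin n → O → ℝ≥0) (i : Fin n) : ℝ≥0 :=
  ((univ.erase i).filter
      (fun j => b j (g (univ.erase i) b) ≠ b j (g univ b))).sup
    (fun j => b j (g (univ.erase i) b))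

/-!
Let `B` and `B'` be the truthful and the deviating virtual profiles; they differ only in row `i`,
so without bidder `i` the mechanism picks the same outcome `o₀` for both. Suppose the deviation
gets `i` an outcome `o'` worth more than the truthful outcome `o`, so `B i o < B i o'`.
If `o' = o₀`, inserting the larger value `B i o'` into the lexicographically larger sorted vector
at `o₀` gives a larger sorted vector. If `o' ≠ o₀`, then (no ties) the price is the largest value
of the others at `o₀`, so affordability puts every value at `o₀`, hence by maximality of `o₀`
every value of the others at `o`, strictly below `B i o'`. Either way the sorted vector at `o'`
beats the one at `o`, contradicting optimality of `o`. A deviation to an outcome of equal value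
yields the same outcome (no ties), and the price only depends on the others' values at the
two selected outcomes, so it does not change.
-/

namespace List

variable {α : Type*} [LinearOrder α]

theorem orderedInsert_ge_eq_cons {a : α} {l : List α} (h : ∀ x ∈ l, x ≤ a) :
    l.orderedInsert (· ≥ ·) a = a :: l := by
  cases l with
  | nil => rfl
  | cons b t => exact orderedInsert_cons_of_le _ _ (h b mem_cons_self)

theorem orderedInsert_ge_lt_orderedInsert_ge_left {x y : α} {l : List α}
    (hl : l.Pairwise (· ≥ ·)) (hxy : x < y) :
    l.orderedInsert (· ≥ ·) x < l.orderedInsert (· ≥ ·) y := by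
  induction l with
  | nil => exact Lex.rel hxy
  | cons a t ih =>
    have ht := (pairwise_cons.1 hl).2
    simp only [orderedInsert_cons]
    by_cases hxa : a ≤ x
    · rw [if_pos hxa, if_pos (hxa.trans hxy.le)]
      exact Lex.rel hxy
    rw [if_neg hxa]
    by_cases hya : a ≤ y
    · rw [if_pos hya]
      rcases hya.lt_or_eq with hay | rfl
      · exact Lex.rel hay
      · rw [← orderedInsert_ge_eq_cons fun z hz => hl.rel_head (mem_cons_of_mem _ hz)]
        exact Lex.cons (ih ht)
    · rw [if_neg hya]
      exact Lex.cons (ih ht)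

theorem orderedInsert_ge_lt_orderedInsert_ge_right (x : α) {l₁ l₂ : List α} (h : l₁ < l₂) :
    l₁.orderedInsert (· ≥ ·) x < l₂.orderedInsert (· ≥ ·) x := by
  change Lex (· < ·) l₁ l₂ at h
  induction h with
  | nil =>
    rw [orderedInsert_nil, orderedInsert_cons]
    split_ifs with hx
    · exact Lex.cons Lex.nil
    · exact Lex.rel (lt_of_not_ge hx)
  | cons h ih =>
    simp only [orderedInsert_cons]
    split_ifs
    · exact Lex.cons (Lex.cons h)
    · exact Lex.cons ih
  | @rel a _ c _ hac =>
    simp only [orderedInsert_cons]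
    split_ifs with hxa hxc hxc
    · exact Lex.cons (Lex.rel hac)
    · exact Lex.rel (lt_of_not_ge hxc)
    · exact absurd (hac.trans_le hxc) (not_lt.2 (le_of_not_ge hxa))
    · exact Lex.rel hac

theorem orderedInsert_ge_lt_orderedInsert_ge {x y : α} {l₁ l₂ : List α}
    (hl₁ : l₁.Pairwise (· ≥ ·)) (hxy : x < y) (h : l₁ ≤ l₂) :
    l₁.orderedInsert (· ≥ ·) x < l₂.orderedInsert (· ≥ ·) y := by
  refine (orderedInsert_ge_lt_orderedInsert_ge_left hl₁ hxy).trans_le ?_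
  rcases h.lt_or_eq with h | rfl
  · exact (orderedInsert_ge_lt_orderedInsert_ge_right y h).le
  · rfl

theorem exists_ge_of_le_of_mem {l₁ l₂ : List α} (hl₁ : l₁.Pairwise (· ≥ ·)) (h : l₁ ≤ l₂)
    {x : α} (hx : x ∈ l₁) : ∃ y ∈ l₂, x ≤ y := by
  obtain ⟨a, t₁, rfl⟩ := exists_cons_of_ne_nil (ne_nil_of_mem hx)
  obtain ⟨c, t₂, rfl⟩ : ∃ c t₂, l₂ = c :: t₂ := by
    cases l₂ with
    | nil => exact absurd h (not_le.2 (Lex.nil))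
    | cons c t₂ => exact ⟨c, t₂, rfl⟩
  have hac : a ≤ c := by
    rcases h.lt_or_eq with h | h
    · exact head_le_of_lt h
    · exact (cons_eq_cons.1 h).1.le
  exact ⟨c, mem_cons_self, (hl₁.rel_head hx).trans hac⟩

theorem lt_of_forall_lt_of_mem {l₁ l₂ : List α} (hl₂ : l₂.Pairwise (· ≥ ·)) {y : α}
    (hy : y ∈ l₂) (h : ∀ x ∈ l₁, x < y) : l₁ < l₂ := by
  obtain ⟨c, t₂, rfl⟩ := exists_cons_of_ne_nil (ne_nil_of_mem hy)
  cases l₁ with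
  | nil => exact Lex.nil
  | cons a t₁ => exact Lex.rel ((h a mem_cons_self).trans_le (hl₂.rel_head hy))

end List

section Mechanism

-- Rebinding `O` detaches the `Fintype` and `DecidableEq` instances declared with it above.
variable {O : Type*} {s : Finset (Fin n)} {b b' : Fin n → O → ℝ≥0} {o o' : O}

theorem mem_sortedValsOn {x : ℝ≥0} : x ∈ sortedValsOn s b o ↔ ∃ j ∈ s, b j o = x := by
  simp [sortedValsOn]

theorem pairwise_sortedValsOn : (sortedValsOn s b o).Pairwise (· ≥ ·) :=
  List.pairwise_reverse.2 (Multiset.pairwise_sort _ _)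

theorem coe_sortedValsOn : (sortedValsOn s b o : Multiset ℝ≥0) = s.val.map (b · o) := by
  rw [sortedValsOn, Multiset.coe_reverse, Multiset.sort_eq]

theorem sortedValsOn_congr (h : ∀ j ∈ s, b j = b' j) :
    sortedValsOn s b o = sortedValsOn s b' o := by
  rw [sortedValsOn, sortedValsOn, Multiset.map_congr rfl fun j hj => congrFun (h j hj) o]

theorem sortedValsOn_eq_orderedInsert {i : Fin n} (hi : i ∈ s) :
    sortedValsOn s b o = (sortedValsOn (s.erase i) b o).orderedInsert (· ≥ ·) (b i o) := by
  refine List.Perm.eq_of_pairwise' pairwise_sortedValsOn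
    (pairwise_sortedValsOn.orderedInsert _ _) ?_
  refine List.Perm.trans ?_ (List.perm_orderedInsert _ _ _).symm
  rw [← Multiset.coe_eq_coe, ← Multiset.cons_coe, coe_sortedValsOn, coe_sortedValsOn,
    Finset.erase_val, ← Multiset.map_cons (b · o), Multiset.cons_erase (Finset.mem_def.1 hi)]

theorem DistinctVals.injective (hb : DistinctVals b) (i : Fin n) : Function.Injective (b i) :=
  fun _ _ h => by_contra fun hne => hb i i _ _ (by simpa using hne) h

theorem DistinctVals.sortedValsOn_injective (hb : DistinctVals b) (hs : s.Nonempty) :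
    Function.Injective (sortedValsOn s b) := by
  intro o₁ o₂ h
  obtain ⟨j, hj⟩ := hs
  have hmem : b j o₁ ∈ s.val.map (b · o₂) := by
    rw [← coe_sortedValsOn, ← h, coe_sortedValsOn]
    exact Multiset.mem_map_of_mem _ hj
  obtain ⟨k, -, hk⟩ := Multiset.mem_map.1 hmem
  by_contra hne
  exact hb k j o₂ o₁ (by simp [Ne.symm hne]) hk

theorem isIterMaxOn_iff : IsIterMaxOn s b o ↔ ∀ o', sortedValsOn s b o' ≤ sortedValsOn s b o :=
  forall_congr' fun _ => (le_iff_eq_or_lt).symm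

theorem IsIterMaxOn.congr (h : ∀ j ∈ s, b j = b' j) (hb : IsIterMaxOn s b o) :
    IsIterMaxOn s b' o := by
  simpa only [isIterMaxOn_iff, sortedValsOn_congr h] using hb

theorem IsIterMaxOn.unique (hb : DistinctVals b) (hs : s.Nonempty) (h : IsIterMaxOn s b o)
    (h' : IsIterMaxOn s b o') : o = o' :=
  hb.sortedValsOn_injective hs <|
    le_antisymm (isIterMaxOn_iff.1 h' o) (isIterMaxOn_iff.1 h o')

theorem IsIterMaxOn.exists_le (h : IsIterMaxOn s b o) {j : Fin n} (hj : j ∈ s) (o' : O) :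
    ∃ k ∈ s, b j o' ≤ b k o := by
  obtain ⟨y, hy, hjy⟩ := List.exists_ge_of_le_of_mem pairwise_sortedValsOn
    (isIterMaxOn_iff.1 h o') (mem_sortedValsOn.2 ⟨j, hj, rfl⟩)
  obtain ⟨k, hk, rfl⟩ := mem_sortedValsOn.1 hy
  exact ⟨k, hk, hjy⟩

theorem sortedValsOn_lt_of_isIterMaxOn_erase {i : Fin n} (hi : i ∈ s)
    (h : IsIterMaxOn (s.erase i) b o') (hlt : b i o < b i o') :
    sortedValsOn s b o < sortedValsOn s b o' := by
  rw [sortedValsOn_eq_orderedInsert hi, sortedValsOn_eq_orderedInsert hi]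
  exact List.orderedInsert_ge_lt_orderedInsert_ge pairwise_sortedValsOn hlt
    (isIterMaxOn_iff.1 h o)

theorem sortedValsOn_lt_of_isIterMaxOn_erase_of_forall_lt {i : Fin n} {o₀ : O} (hi : i ∈ s)
    (h : IsIterMaxOn (s.erase i) b o₀) (hrest : ∀ j ∈ s.erase i, b j o₀ < b i o')
    (hlt : b i o < b i o') : sortedValsOn s b o < sortedValsOn s b o' := by
  refine List.lt_of_forall_lt_of_mem pairwise_sortedValsOn (mem_sortedValsOn.2 ⟨i, hi, rfl⟩) ?_
  rintro _ hx
  obtain ⟨j, hj, rfl⟩ := mem_sortedValsOn.1 hx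
  by_cases hji : j = i
  · exact hji ▸ hlt
  obtain ⟨k, hk, hjk⟩ := h.exists_le (mem_erase.2 ⟨hji, hj⟩) o
  exact hjk.trans_lt (hrest k hk)

variable {g : Finset (Fin n) → (Fin n → O → ℝ≥0) → O} {i : Fin n}

theorem extPay_congr (hrest : ∀ j ≠ i, b j (g (univ.erase i) b) = b' j (g (univ.erase i) b'))
    (hall : ∀ j ≠ i, b j (g univ b) = b' j (g univ b')) : extPay g b i = extPay g b' i := by
  have hfilter : (univ.erase i).filter (fun j => b j (g (univ.erase i) b) ≠ b j (g univ b)) =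
      (univ.erase i).filter (fun j => b' j (g (univ.erase i) b') ≠ b' j (g univ b')) :=
    filter_congr fun j hj => by rw [hrest j (ne_of_mem_erase hj), hall j (ne_of_mem_erase hj)]
  exact (congrArg₂ Finset.sup hfilter rfl).trans <| Finset.sup_congr rfl fun j hj =>
    hrest j (ne_of_mem_erase (mem_filter.1 hj).1)

theorem le_extPay (hb : DistinctVals b) (hne : g (univ.erase i) b ≠ g univ b) {j : Fin n}
    (hj : j ≠ i) : b j (g (univ.erase i) b) ≤ extPay g b i :=
  le_sup (f := fun j => b j (g (univ.erase i) b)) <|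
    mem_filter.2 ⟨mem_erase.2 ⟨hj, mem_univ j⟩, hb j j _ _ (by simpa using hne)⟩

theorem extPay_eq_of_outcome_eq (hg : ∀ s b, IsIterMaxOn s b (g s b))
    (hagree : ∀ j ≠ i, b j = b' j) (hb : DistinctVals b) (ho : g univ b = g univ b') :
    extPay g b i = extPay g b' i := by
  refine extPay_congr (fun j hj => ?_) (fun j hj => by rw [ho, hagree j hj])
  have hs : ∀ k ∈ univ.erase i, b' k = b k := fun k hk => (hagree k (ne_of_mem_erase hk)).symm
  rw [(hg _ b).unique hb ⟨j, mem_erase.2 ⟨hj, mem_univ j⟩⟩ ((hg _ b').congr hs), hagree j hj]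

theorem not_lt_of_extPay_le (hg : ∀ s b, IsIterMaxOn s b (g s b))
    (hagree : ∀ j ≠ i, b j = b' j) (hb : DistinctVals b) (hb' : DistinctVals b')
    (hpay : extPay g b' i ≤ b i (g univ b')) : ¬ b i (g univ b) < b i (g univ b') := by
  intro hlt
  have hs : ∀ j ∈ univ.erase i, b' j = b j := fun j hj => (hagree j (ne_of_mem_erase hj)).symm
  refine (isIterMaxOn_iff.1 (hg univ b) (g univ b')).not_gt ?_
  by_cases hrest : g (univ.erase i) b' = g univ b'
  · exact sortedValsOn_lt_of_isIterMaxOn_erase (mem_univ i) (hrest ▸ (hg _ b').congr hs) hlt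
  refine sortedValsOn_lt_of_isIterMaxOn_erase_of_forall_lt (mem_univ i) ((hg _ b').congr hs)
    (fun j hj => ?_) hlt
  have hji := ne_of_mem_erase hj
  rw [hagree j hji]
  exact ((le_extPay hb' hrest hji).trans hpay).lt_of_ne
    (hagree j hji ▸ hb j i _ _ (by simp [hji]))

end Mechanism

theorem virtual_welfare_truthful_for_value_maximizers_general
    (φ : Fin n → ℝ≥0 → ℝ≥0)
    (hmono : ∀ i, StrictMono (φ i))
    (hbij : ∀ i, Function.Bijective (φ i))
    (g : Finset (Fin n) → (Fin n → O → ℝ≥0) → O)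
    (hg : ∀ (s : Finset (Fin n)) (b : Fin n → O → ℝ≥0), IsIterMaxOn s b (g s b))
    (i : Fin n) (v b : Fin n → O → ℝ≥0)
    (htruth_distinct :
      DistinctVals (fun j o => φ j (Function.update b i (v i) j o)))
    (hdev_distinct : DistinctVals (fun j o => φ j (b j o))) :
    ¬ ((v i (g univ (fun j o => φ j (b j o))) >
          v i (g univ (fun j o => φ j (Function.update b i (v i) j o))) ∧
        Function.invFun (φ i) (extPay g (fun j o => φ j (b j o)) i) ≤
          v i (g univ (fun j o => φ j (b j o)))) ∨
       (v i (g univ (fun j o => φ j (b j o))) =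
          v i (g univ (fun j o => φ j (Function.update b i (v i) j o))) ∧
        Function.invFun (φ i) (extPay g (fun j o => φ j (b j o)) i) <
          Function.invFun (φ i)
            (extPay g (fun j o => φ j (Function.update b i (v i) j o)) i))) := by
  set B : Fin n → O → ℝ≥0 := fun j o => φ j (Function.update b i (v i) j o)
  set B' : Fin n → O → ℝ≥0 := fun j o => φ j (b j o)
  have hagree : ∀ j ≠ i, B j = B' j := fun j hj => by simp [B, B', Function.update_of_ne hj]
  have hBi : ∀ o, φ i (v i o) = B i o := fun o => by simp [B]
  rintro (⟨hval, hpay⟩ | ⟨hval, hpay⟩)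
  · refine not_lt_of_extPay_le hg hagree htruth_distinct hdev_distinct ?_ ?_
    · calc extPay g B' i = φ i (Function.invFun (φ i) (extPay g B' i)) :=
            (Function.rightInverse_invFun (hbij i).2 _).symm
        _ ≤ φ i (v i (g univ B')) := (hmono i).monotone hpay
        _ = B i (g univ B') := hBi _
    · rw [← hBi, ← hBi]
      exact hmono i hval
  · have ho : g univ B = g univ B' := htruth_distinct.injective i (by rw [← hBi, ← hBi, hval])
    rw [extPay_eq_of_outcome_eq hg hagree htruth_distinct ho] at hpay
    exact lt_irrefl _ hpay

/-- for any continuous, strictly increasing bijections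
`φ i : ℝ≥0 → ℝ≥0`, the virtual-welfare-maximizing mechanism — running the
iterated-max welfare mechanism on virtual values `φ i (b i o)` and charging
`p_i = φ_i⁻¹(π_i)` where `π_i` is the virtual externality payment — is truthful
for simple value maximizers on profiles where no ties among virtual values
occur. -/
theorem virtual_welfare_truthful_for_value_maximizers [Nonempty O]
    (hO : 3 ≤ Fintype.card O)
    (φ : Fin n → ℝ≥0 → ℝ≥0)
    (hcont : ∀ i, Continuous (φ i))
    (hmono : ∀ i, StrictMono (φ i))
    (hbij : ∀ i, Function.Bijective (φ i))
    (g : Finset (Fin n) → (Fin n → O → ℝ≥0) → O)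
    (hg : ∀ (s : Finset (Fin n)) (b : Fin n → O → ℝ≥0), IsIterMaxOn s b (g s b))
    (i : Fin n) (v b : Fin n → O → ℝ≥0)
    (htruth_distinct :
      DistinctVals (fun j o => φ j (Function.update b i (v i) j o)))
    (hdev_distinct : DistinctVals (fun j o => φ j (b j o))) :
    ¬ ((v i (g univ (fun j o => φ j (b j o))) >
          v i (g univ (fun j o => φ j (Function.update b i (v i) j o))) ∧
        Function.invFun (φ i) (extPay g (fun j o => φ j (b j o)) i) ≤
          v i (g univ (fun j o => φ j (b j o)))) ∨
       (v i (g univ (fun j o => φ j (b j o))) =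
          v i (g univ (fun j o => φ j (Function.update b i (v i) j o))) ∧
        Function.invFun (φ i) (extPay g (fun j o => φ j (b j o)) i) <
          Function.invFun (φ i)
            (extPay g (fun j o => φ j (Function.update b i (v i) j o)) i))) :=
  virtual_welfare_truthful_for_value_maximizers_general φ hmono hbij g hg i v b htruth_distinct
    hdev_distinct
end

section
/- Corollary of the robustness theorem for slot auctions: if the slot click factors satisfy α_{i+1} ≤ (γ/(γ+1)) · α_i for all i (consecutive slots differ by factor at least (γ+1)/γ), then in a standard sponsored search auction with GSP pricing, no bidder with super-quasilinear preferences and ROI constraint γ wishes to misreport, regardless of others' bids. -/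
/-- Rank of our bidder bidding `b` against fixed opponent scores `s` (ties
against her). -/
noncomputable def gspRank {k : ℕ} (s : Fin k → ℝ) (β : ℝ) (b : ℝ) : ℕ :=
  {j : Fin k | β * b ≤ s j}.ncard

/-- Expected-click allocation (`A r` = click factor of slot `r+1`, `m` slots). -/
noncomputable def gspAlloc {k : ℕ} (m : ℕ) (s : Fin k → ℝ) (β : ℝ) (A : ℕ → ℝ)
    (b : ℝ) : ℝ :=
  if gspRank s β b < m then A (gspRank s β b) * β else 0

/-- Highest opponent score strictly below our bidder's score (0 if none). -/
noncomputable def gspNextScore {k : ℕ} (s : Fin k → ℝ) (β : ℝ) (b : ℝ) : ℝ :=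
  sSup ({0} ∪ {x : ℝ | (∃ j, s j = x) ∧ x < β * b})

/-- Total expected GSP payment: allocation times the per-click price. -/
noncomputable def gspPay {k : ℕ} (m : ℕ) (s : Fin k → ℝ) (β : ℝ) (A : ℕ → ℝ)
    (b : ℝ) : ℝ :=
  gspAlloc m s β A b * (gspNextScore s β b / β)

private lemma gspT_finite {k : ℕ} (s : Fin k → ℝ) (β b : ℝ) :
    ({0} ∪ {x : ℝ | (∃ j, s j = x) ∧ x < β * b}).Finite :=
  (Set.finite_singleton 0).union ((Set.finite_range s).subset fun _ hx => hx.1)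

private lemma gspT_bdd {k : ℕ} (s : Fin k → ℝ) (β b : ℝ) :
    BddAbove ({0} ∪ {x : ℝ | (∃ j, s j = x) ∧ x < β * b}) :=
  (gspT_finite s β b).bddAbove

private lemma gspNextScore_nonneg {k : ℕ} (s : Fin k → ℝ) (β b : ℝ) :
    0 ≤ gspNextScore s β b :=
  le_csSup (gspT_bdd s β b) (Set.mem_union_left _ (Set.mem_singleton 0))

private lemma gspNextScore_le {k : ℕ} (s : Fin k → ℝ) {β b : ℝ} (h : 0 ≤ β * b) :
    gspNextScore s β b ≤ β * b := by
  unfold gspNextScore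
  apply csSup_le ⟨0, Set.mem_union_left _ (Set.mem_singleton 0)⟩
  rintro x (hx | hx)
  · rw [Set.mem_singleton_iff] at hx; subst hx; exact h
  · exact hx.2.le

private lemma gspNextScore_ge {k : ℕ} (s : Fin k → ℝ) {β b : ℝ} (j : Fin k)
    (h : s j < β * b) : s j ≤ gspNextScore s β b :=
  le_csSup (gspT_bdd s β b) (Set.mem_union_right _ ⟨⟨j, rfl⟩, h⟩)

private lemma gspNextScore_congr {k : ℕ} (s : Fin k → ℝ) {β b b' : ℝ}
    (hle : β * b ≤ β * b') (hrk : gspRank s β b ≤ gspRank s β b') :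
    gspNextScore s β b = gspNextScore s β b' := by
  have hsub : {j : Fin k | β * b' ≤ s j} ⊆ {j : Fin k | β * b ≤ s j} :=
    fun j hj => le_trans hle hj
  have hset : {j : Fin k | β * b' ≤ s j} = {j : Fin k | β * b ≤ s j} :=
    Set.eq_of_subset_of_ncard_le hsub hrk (Set.toFinite _)
  have hN : {x : ℝ | (∃ j, s j = x) ∧ x < β * b}
      = {x : ℝ | (∃ j, s j = x) ∧ x < β * b'} := by
    ext x
    constructor
    · rintro ⟨⟨j, rfl⟩, hx⟩
      exact ⟨⟨j, rfl⟩, lt_of_lt_of_le hx hle⟩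
    · rintro ⟨⟨j, rfl⟩, hx⟩
      refine ⟨⟨j, rfl⟩, ?_⟩
      by_contra hcon
      push_neg at hcon
      have hmem : j ∈ {j : Fin k | β * b' ≤ s j} := by
        rw [hset]; exact hcon
      exact absurd hx (not_lt.mpr hmem)
  unfold gspNextScore
  rw [hN]

/-- corollary of the robustness theorem for slot auctions: if
consecutive slot click factors satisfy `α_{i+1} ≤ (γ/(γ+1)) · α_i`, then in a
standard sponsored search auction with GSP pricing no bidder with
super-quasilinear preferences and ROI constraint `γ` wishes to misreport,
regardless of the others' bids: her truthful report `t/(1+γ)` (her willingness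
to pay per click) yields a (value, payment) pair weakly preferred to the pair
produced by any other bid. -/
theorem gsp_slot_separation_no_misreport
    {k : ℕ} (m : ℕ) (s : Fin k → ℝ) (β : ℝ) (A : ℕ → ℝ) (γ : ℝ)
    (hβ : 0 < β) (hγ : 0 < γ)
    (hs : ∀ j, 0 ≤ s j) (hs_distinct : Function.Injective s)
    (hA_strict : ∀ r r', r < r' → r' < m → A r' < A r)
    (hA_pos : ∀ r, r < m → 0 < A r)
    -- consecutive slots differ by a factor of at least (γ+1)/γ
    (hsep : ∀ r, r + 1 < m → A (r + 1) ≤ γ / (γ + 1) * A r)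
    (t : ℝ) (ht : 0 ≤ t)
    -- no ties between the bidder's truthful score and any opponent score
    (hnotie : ∀ j, s j ≠ β * (t / (1 + γ)))
    (pref : ℝ → ℝ → ℝ → ℝ → Prop)
    -- super-quasilinearity
    (hSQL : ∀ a p c q : ℝ, a > c → a - p ≥ c - q → pref a p c q)
    -- at equal value, lower payment preferred
    (hEqVal : ∀ a p q : ℝ, p ≤ q → pref a p a q)
    -- an ROI-feasible pair is preferred to any ROI-infeasible pair
    (hROI : ∀ a p c q : ℝ, 0 ≤ p → p ≤ a / (1 + γ) → q > c / (1 + γ) →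
      pref a p c q) :
    ∀ b : ℝ, 0 ≤ b →
      pref (gspAlloc m s β A (t / (1 + γ)) * t) (gspPay m s β A (t / (1 + γ)))
        (gspAlloc m s β A b * t) (gspPay m s β A b) := by
  intro b hb
  have hγ1 : (0 : ℝ) < 1 + γ := by linarith
  set tb := t / (1 + γ) with htb_def
  have htb0 : 0 ≤ tb := div_nonneg ht hγ1.le
  have hβtb : 0 ≤ β * tb := mul_nonneg hβ.le htb0
  have hβb : 0 ≤ β * b := mul_nonneg hβ.le hb
  have hnsT_le : gspNextScore s β tb ≤ β * tb := gspNextScore_le s hβtb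
  have hnsT0 : 0 ≤ gspNextScore s β tb := gspNextScore_nonneg s β tb
  have hnsB0 : 0 ≤ gspNextScore s β b := gspNextScore_nonneg s β b
  have hallocT0 : 0 ≤ gspAlloc m s β A tb := by
    unfold gspAlloc; split
    · exact mul_nonneg (hA_pos _ ‹_›).le hβ.le
    · exact le_rfl
  have hallocB0 : 0 ≤ gspAlloc m s β A b := by
    unfold gspAlloc; split
    · exact mul_nonneg (hA_pos _ ‹_›).le hβ.le
    · exact le_rfl
  have hpayT0 : 0 ≤ gspPay m s β A tb :=
    mul_nonneg hallocT0 (div_nonneg hnsT0 hβ.le)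
  have hpayB0 : 0 ≤ gspPay m s β A b :=
    mul_nonneg hallocB0 (div_nonneg hnsB0 hβ.le)
  have hpayT_le : gspPay m s β A tb ≤ gspAlloc m s β A tb * t / (1 + γ) := by
    unfold gspPay
    have h1 : gspNextScore s β tb / β ≤ tb := by
      rw [div_le_iff₀ hβ]
      calc gspNextScore s β tb ≤ β * tb := hnsT_le
        _ = tb * β := by ring
    calc gspAlloc m s β A tb * (gspNextScore s β tb / β)
        ≤ gspAlloc m s β A tb * tb := by
          exact mul_le_mul_of_nonneg_left h1 hallocT0
      _ = gspAlloc m s β A tb * t / (1 + γ) := by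
          rw [htb_def]; ring
  have hzero : ∀ b' : ℝ, ¬ gspRank s β b' < m →
      gspAlloc m s β A b' = 0 ∧ gspPay m s β A b' = 0 := by
    intro b' h
    have h1 : gspAlloc m s β A b' = 0 := by unfold gspAlloc; rw [if_neg h]
    exact ⟨h1, by unfold gspPay; rw [h1, zero_mul]⟩
  rcases lt_trichotomy (gspRank s β b) (gspRank s β tb) with hlt | heq | hgt
  · -- better slot than truthful: ROI violated (or both empty)
    have hnsub : ¬ ({j : Fin k | β * tb ≤ s j} ⊆ {j : Fin k | β * b ≤ s j}) := by
      intro hsub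
      have := Set.ncard_le_ncard hsub (Set.toFinite _)
      exact absurd this (not_le.mpr hlt)
    obtain ⟨j, hj1, hj2⟩ := Set.not_subset.mp hnsub
    have hj1' : β * tb < s j := lt_of_le_of_ne hj1 (Ne.symm (hnotie j))
    have hj2' : s j < β * b := not_le.mp hj2
    have hnsB_gt : β * tb < gspNextScore s β b :=
      lt_of_lt_of_le hj1' (gspNextScore_ge s j hj2')
    by_cases hBm : gspRank s β b < m
    · have hallocB_pos : 0 < gspAlloc m s β A b := by
        unfold gspAlloc; rw [if_pos hBm]
        exact mul_pos (hA_pos _ hBm) hβ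
      apply hROI _ _ _ _ hpayT0 hpayT_le
      have hdiv : tb < gspNextScore s β b / β := by
        rw [lt_div_iff₀ hβ]
        calc tb * β = β * tb := by ring
          _ < gspNextScore s β b := hnsB_gt
      calc gspAlloc m s β A b * t / (1 + γ)
          = gspAlloc m s β A b * tb := by rw [htb_def]; ring
        _ < gspAlloc m s β A b * (gspNextScore s β b / β) :=
            mul_lt_mul_of_pos_left hdiv hallocB_pos
        _ = gspPay m s β A b := rfl
    · have hTm : ¬ gspRank s β tb < m := fun h => hBm (hlt.trans h)
      obtain ⟨ha1, hp1⟩ := hzero tb hTm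
      obtain ⟨ha2, hp2⟩ := hzero b hBm
      rw [ha1, ha2, hp1, hp2]
      exact hEqVal _ _ _ le_rfl
  · -- same rank: identical outcome
    have hns : gspNextScore s β b = gspNextScore s β tb := by
      rcases le_total (β * b) (β * tb) with h | h
      · exact gspNextScore_congr s h heq.le
      · exact (gspNextScore_congr s h heq.ge).symm
    have hall : gspAlloc m s β A b = gspAlloc m s β A tb := by
      unfold gspAlloc; rw [heq]
    have hpay : gspPay m s β A b = gspPay m s β A tb := by
      unfold gspPay; rw [hall, hns]
    rw [hall, hpay]
    exact hEqVal _ _ _ le_rfl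
  · -- worse slot than truthful
    rcases ht.eq_or_lt with ht0 | ht0
    · -- t = 0 : both values are 0, truthful payment is 0
      have htb' : tb = 0 := by rw [htb_def, ← ht0, zero_div]
      have hns0 : gspNextScore s β tb = 0 := by
        refine le_antisymm ?_ hnsT0
        calc gspNextScore s β tb ≤ β * tb := hnsT_le
          _ = 0 := by rw [htb', mul_zero]
      have hpayT : gspPay m s β A tb = 0 := by
        unfold gspPay; rw [hns0, zero_div, mul_zero]
      rw [← ht0, mul_zero, mul_zero, hpayT]
      exact hEqVal _ _ _ hpayB0
    · by_cases hTm : gspRank s β tb < m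
      · have hAT : gspAlloc m s β A tb = A (gspRank s β tb) * β := by
          unfold gspAlloc; rw [if_pos hTm]
        have hallocT_pos : 0 < gspAlloc m s β A tb := by
          rw [hAT]; exact mul_pos (hA_pos _ hTm) hβ
        by_cases hBm : gspRank s β b < m
        · -- both get slots; separation condition kicks in
          have hAB : gspAlloc m s β A b = A (gspRank s β b) * β := by
            unfold gspAlloc; rw [if_pos hBm]
          have hAlt : A (gspRank s β b) < A (gspRank s β tb) :=
            hA_strict _ _ hgt hBm
          have h1m : gspRank s β tb + 1 < m := lt_of_le_of_lt hgt hBm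
          have hsep' : A (gspRank s β b) ≤ γ / (γ + 1) * A (gspRank s β tb) := by
            have h2 : A (gspRank s β b) ≤ A (gspRank s β tb + 1) := by
              rcases eq_or_lt_of_le (Nat.succ_le_of_lt hgt) with h | h
              · rw [← h]
              · exact (hA_strict _ _ h hBm).le
            exact h2.trans (hsep _ h1m)
          apply hSQL
          · rw [hAT, hAB]
            exact mul_lt_mul_of_pos_right (mul_lt_mul_of_pos_right hAlt hβ) ht0
          · -- utilities compare
            have e2 : gspAlloc m s β A b * t
                ≤ γ / (1 + γ) * (gspAlloc m s β A tb * t) := by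
              rw [hAT, hAB]
              calc A (gspRank s β b) * β * t
                  = A (gspRank s β b) * (β * t) := by ring
                _ ≤ γ / (γ + 1) * A (gspRank s β tb) * (β * t) :=
                    mul_le_mul_of_nonneg_right hsep'
                      (mul_nonneg hβ.le ht0.le)
                _ = γ / (1 + γ) * (A (gspRank s β tb) * β * t) := by ring
            have e3 : gspAlloc m s β A tb * t - gspAlloc m s β A tb * t / (1 + γ)
                = γ / (1 + γ) * (gspAlloc m s β A tb * t) := by
              field_simp
              ring
            linarith [hpayB0, hpayT_le]
        · -- misreport gets no slot
          obtain ⟨ha2, hp2⟩ := hzero b hBm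
          rw [ha2, hp2, zero_mul]
          apply hSQL
          · exact mul_pos hallocT_pos ht0
          · have : gspAlloc m s β A tb * t / (1 + γ) ≤ gspAlloc m s β A tb * t :=
              div_le_self (mul_pos hallocT_pos ht0).le (by linarith)
            linarith [hpayT_le]
      · -- truthful already gets no slot, nor does the misreport
        have hBm : ¬ gspRank s β b < m := fun h => hTm (hgt.trans h)
        obtain ⟨ha1, hp1⟩ := hzero tb hTm
        obtain ⟨ha2, hp2⟩ := hzero b hBm
        rw [ha1, ha2, hp1, hp2]
        exact hEqVal _ _ _ le_rfl
end
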